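/- In the random CNOT circuit (no measurements), the relative entropies of coherence C_x and C_z are conserved: a CNOT gate on control i and target j maps X-basis states to X-basis states and Z-basis states to Z-basis states bijectively, hence leaves both the X-basis and Z-basis outcome distributions' Shannon entropies, and thus C_x and C_z of any pure state, unchanged. Consequently, for an initial product state with N_x qubits X-polarized and N_z = L − N_x qubits Z-polarized, the entanglement entropy of the region [1,x] at any time satisfies S(x) ≤ min(x, L − x, N_z, N_x). -/

import Mathlib

open scoped BigOperators

noncomputable section

/-- Bit strings labelling the X (computational) basis of `L` qubits. -/
abbrev QV (L : ℕ) := Fin L → ZMod 2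

/-- Shannon entropy in bits. -/
def shannonEntropy {ι : Type*} [Fintype ι] (P : ι → ℝ) : ℝ :=
  ∑ i, -(P i * Real.logb 2 (P i))

/-- von Neumann entropy in bits of a Hermitian matrix. -/
def vonNeumannEntropy {n : Type*} [Fintype n] [DecidableEq n]
    (ρ : Matrix n n ℂ) (hρ : ρ.IsHermitian) : ℝ :=
  ∑ i, -(hρ.eigenvalues i * Real.logb 2 (hρ.eigenvalues i))

/-- In the X basis, the CNOT with control `i` and target `j` permutes basis
states as `x_i ↦ x_i + x_j` (equivalently `|z_i, z_j⟩ ↦ |z_i, z_j ⊕ z_i⟩`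
in the Z basis). -/
def cnotPerm {L : ℕ} (i j : Fin L) (s : QV L) : QV L :=
  Function.update s i (s i + s j)

/-- Apply a sequence of CNOT gates (given as control/target pairs) to a state
written in the X basis. -/
def applyCNOTs {L : ℕ} : List (Fin L × Fin L) → (QV L → ℂ) → (QV L → ℂ)
  | [], ψ => ψ
  | p :: rest, ψ => applyCNOTs rest fun s => ψ (cnotPerm p.1 p.2 s)

/-- Amplitudes of `ψ` in the Z basis (Hadamard transform of the X-basis
amplitudes). -/
def zAmp {L : ℕ} (ψ : QV L → ℂ) (s : QV L) : ℂ :=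
  ((Real.sqrt (2 ^ L) : ℝ)⁻¹ : ℂ) * ∑ t, (-1 : ℂ) ^ (∑ i, (s i * t i).val) * ψ t

/-- Glue a configuration on a region `R` with one on its complement. -/
def merge {L : ℕ} (R : Finset (Fin L)) (a : {i // i ∈ R} → ZMod 2)
    (c : {i // i ∉ R} → ZMod 2) : QV L :=
  fun i => if h : i ∈ R then a ⟨i, h⟩ else c ⟨i, h⟩

/-- Reduced density matrix of the pure state `ψ` on the region `R`. -/
def reducedDM {L : ℕ} (R : Finset (Fin L)) (ψ : QV L → ℂ) :
    Matrix ({i // i ∈ R} → ZMod 2) ({i // i ∈ R} → ZMod 2) ℂ :=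
  fun a b => ∑ c : {i // i ∉ R} → ZMod 2, ψ (merge R a c) * star (ψ (merge R b c))

/-- Qubit polarized along `+X`, in the X basis. -/
def qX : ZMod 2 → ℂ := fun b => if b = 0 then 1 else 0

/-- Qubit polarized along `+Z`, in the X basis. -/
def qZ : ZMod 2 → ℂ := fun _ => ((Real.sqrt 2)⁻¹ : ℝ)

/-!
A CNOT permutes the X basis by `cnotPerm i j` and, since
`s ⬝ᵥ cnotPerm i j t = cnotPerm j i s ⬝ᵥ t`, the Z basis by `cnotPerm j i`; so both outcome
distributions are merely permuted and their Shannon entropies are conserved.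

The initial product state is the uniform superposition over the additive subgroup
`{s | s i = 0 for every X-polarized i}` of order `2 ^ N_z`, and CNOTs, being additive
bijections, keep the state of this form. Splitting the qubits as `A × B`, let `M` be the
indicator matrix of such a subgroup `V ≤ A × B`, and `V_A`, `V_B` the parts of `V` inside
`A × 0` and `0 × B`. Translating by an element of `V` shows `M Mᵀ M = |V_A| |V_B| M`, so the
reduced density matrix `|V|⁻¹ M Mᵀ` is a multiple of a projection and its entropy is
`log₂ (|V| / (|V_A| |V_B|))`. The four bounds come from `|V| ≤ |A| |V_B|`, `|V| ≤ |B| |V_A|`,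
`|V_A|, |V_B| ≥ 1` and the product of the first two.
-/

open Matrix

section CNOT

variable {L : ℕ}

theorem cnotPerm_eq_add_single (i j : Fin L) (s : QV L) :
    cnotPerm i j s = s + Pi.single i (s j) := by
  ext k
  rcases eq_or_ne k i with rfl | hk <;> simp [cnotPerm, *]

theorem cnotPerm_add (i j : Fin L) (s t : QV L) :
    cnotPerm i j (s + t) = cnotPerm i j s + cnotPerm i j t := by
  simp only [cnotPerm_eq_add_single, Pi.add_apply, Pi.single_add]
  abel

theorem cnotPerm_involutive {i j : Fin L} (h : i ≠ j) : Function.Involutive (cnotPerm i j) := by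
  intro s
  rw [cnotPerm_eq_add_single, cnotPerm_eq_add_single, Pi.add_apply,
    Pi.single_eq_of_ne h.symm, add_zero, add_assoc, ← Pi.single_add, CharTwo.add_self_eq_zero,
    Pi.single_zero, add_zero]

theorem dotProduct_cnotPerm (i j : Fin L) (s t : QV L) :
    s ⬝ᵥ cnotPerm i j t = cnotPerm j i s ⬝ᵥ t := by
  simp only [cnotPerm_eq_add_single, dotProduct_add, add_dotProduct, dotProduct_single,
    single_dotProduct]

def cnotAddEquiv {i j : Fin L} (h : i ≠ j) : QV L ≃+ QV L where
  toEquiv := (cnotPerm_involutive h).toPerm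
  map_add' := cnotPerm_add i j

theorem applyCNOTs_induction (P : (QV L → ℂ) → Prop)
    (hP : ∀ i j, i ≠ j → ∀ ψ, P ψ → P fun s => ψ (cnotPerm i j s))
    {gates : List (Fin L × Fin L)} (hgates : ∀ p ∈ gates, p.1 ≠ p.2) {ψ : QV L → ℂ}
    (hψ : P ψ) : P (applyCNOTs gates ψ) := by
  induction gates generalizing ψ with
  | nil => exact hψ
  | cons p gates ih =>
    exact ih (fun q hq => hgates q (List.mem_cons_of_mem p hq))
      (hP p.1 p.2 (hgates p List.mem_cons_self) ψ hψ)

theorem applyCNOTs_invariant {α : Type*} (F : (QV L → ℂ) → α)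
    (hF : ∀ i j, i ≠ j → ∀ ψ, F (fun s => ψ (cnotPerm i j s)) = F ψ)
    {gates : List (Fin L × Fin L)} (hgates : ∀ p ∈ gates, p.1 ≠ p.2) (ψ : QV L → ℂ) :
    F (applyCNOTs gates ψ) = F ψ :=
  applyCNOTs_induction (fun φ => F φ = F ψ) (fun i j h φ hφ => (hF i j h φ).trans hφ)
    hgates rfl

theorem neg_one_pow_sum_val {ι : Type*} [Fintype ι] (f : ι → ZMod 2) :
    (-1 : ℂ) ^ (∑ k, (f k).val) = (-1) ^ (∑ k, f k).val := by
  have hval : (∑ k, (f k).val) % 2 = (∑ k, f k).val := by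
    rw [← ZMod.val_natCast]
    push_cast
    simp only [ZMod.natCast_val, ZMod.cast_id', id]
  rw [neg_one_pow_eq_pow_mod_two, hval]

theorem zAmp_eq (ψ : QV L → ℂ) (s : QV L) :
    zAmp ψ s =
      ((Real.sqrt (2 ^ L) : ℝ)⁻¹ : ℂ) * ∑ t, (-1 : ℂ) ^ (s ⬝ᵥ t).val * ψ t := by
  simp only [zAmp, neg_one_pow_sum_val, dotProduct]

theorem zAmp_comp_cnotPerm {i j : Fin L} (h : i ≠ j) (ψ : QV L → ℂ) (s : QV L) :
    zAmp (fun t => ψ (cnotPerm i j t)) s = zAmp ψ (cnotPerm j i s) := by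
  simp only [zAmp_eq]
  congr 1
  rw [← Equiv.sum_comp (cnotPerm_involutive h).toPerm]
  simp [dotProduct_cnotPerm, cnotPerm_involutive h _]

theorem shannonEntropy_comp_equiv {ι κ : Type*} [Fintype ι] [Fintype κ] (P : ι → ℝ)
    (e : κ ≃ ι) : shannonEntropy (fun k => P (e k)) = shannonEntropy P :=
  e.sum_comp fun i => -(P i * Real.logb 2 (P i))

theorem shannonEntropy_normSq_comp_cnotPerm {i j : Fin L} (h : i ≠ j) (ψ : QV L → ℂ) :
    shannonEntropy (fun s => ‖ψ (cnotPerm i j s)‖ ^ 2) =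
      shannonEntropy (fun s => ‖ψ s‖ ^ 2) :=
  shannonEntropy_comp_equiv (fun s => ‖ψ s‖ ^ 2) (cnotPerm_involutive h).toPerm

theorem shannonEntropy_normSq_zAmp_comp_cnotPerm {i j : Fin L} (h : i ≠ j) (ψ : QV L → ℂ) :
    shannonEntropy (fun s => ‖zAmp (fun t => ψ (cnotPerm i j t)) s‖ ^ 2) =
      shannonEntropy (fun s => ‖zAmp ψ s‖ ^ 2) := by
  simp only [zAmp_comp_cnotPerm h]
  exact shannonEntropy_comp_equiv (fun s => ‖zAmp ψ s‖ ^ 2) (cnotPerm_involutive h.symm).toPerm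

end CNOT

open Classical in
theorem sum_boole_mem {G R : Type*} [AddGroup G] [Fintype G] [AddCommMonoidWithOne R]
    (H : AddSubgroup G) :
    ∑ g, (if g ∈ H then 1 else 0 : R) = Nat.card H := by
  rw [Finset.sum_boole, Nat.card_eq_fintype_card, Fintype.card_subtype]

open Classical in
def subgroupState {G : Type*} [AddGroup G] (S : AddSubgroup G) (c : ℝ) : G → ℂ :=
  fun g => if g ∈ S then (c : ℂ) else 0

theorem prod_subgroupState {ι : Type*} [Fintype ι] {G : ι → Type*} [∀ i, AddGroup (G i)]
    (H : ∀ i, AddSubgroup (G i)) (c : ι → ℝ) (s : ∀ i, G i) :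
    ∏ i, subgroupState (H i) (c i) (s i) =
      subgroupState (AddSubgroup.pi Set.univ H) (∏ i, c i) s := by
  classical
  simp only [subgroupState, Fintype.prod_ite_zero, AddSubgroup.mem_pi, Set.mem_univ, true_implies,
    Complex.ofReal_prod]

theorem AddSubgroup.card_pi_univ {ι : Type*} [Fintype ι] {G : ι → Type*}
    [∀ i, AddGroup (G i)] (H : ∀ i, AddSubgroup (G i)) :
    Nat.card (AddSubgroup.pi Set.univ H) = ∏ i, Nat.card (H i) := by
  rw [← Nat.card_pi]
  exact Nat.card_congr ((Equiv.subtypeEquivRight fun _ => by simp [AddSubgroup.mem_pi]).trans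
    Equiv.subtypePiEquivPi)

theorem AddSubgroup.card_comap_addEquiv {G H : Type*} [AddGroup G] [AddGroup H] (S : AddSubgroup H)
    (e : G ≃+ H) : Nat.card (S.comap e.toAddMonoidHom) = Nat.card S :=
  Nat.card_congr (e.toEquiv.subtypeEquiv fun _ => Iff.rfl)

section IndicatorMatrix

variable {A B : Type*} [AddCommGroup A] [AddCommGroup B] (V : AddSubgroup (A × B))

open Classical in
def indicatorMatrix (R : Type*) [Zero R] [One R] : Matrix A B R :=
  Matrix.of fun a b => if (a, b) ∈ V then 1 else 0

theorem sum_indicatorMatrix_row_le [Fintype B] (a : A) :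
    ∑ b, indicatorMatrix V ℕ a b ≤ Nat.card (V.comap (AddMonoidHom.inr A B)) := by
  classical
  simp only [indicatorMatrix, of_apply]
  by_cases h : ∃ b₀, (a, b₀) ∈ V
  · obtain ⟨b₀, hb₀⟩ := h
    have hmem (b : B) : (a, b₀ + b) ∈ V ↔ (0, b) ∈ V := by
      rw [show ((a, b₀ + b) : A × B) = (a, b₀) + (0, b) by simp, V.add_mem_cancel_left hb₀]
    rw [← Equiv.sum_comp (Equiv.addLeft b₀)]
    simp only [Equiv.coe_addLeft, hmem]
    exact (sum_boole_mem (V.comap (AddMonoidHom.inr A B))).le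
  · simp_all

theorem sum_indicatorMatrix_col_le [Fintype A] (b : B) :
    ∑ a, indicatorMatrix V ℕ a b ≤ Nat.card (V.comap (AddMonoidHom.inl A B)) := by
  classical
  simp only [indicatorMatrix, of_apply]
  by_cases h : ∃ a₀, (a₀, b) ∈ V
  · obtain ⟨a₀, ha₀⟩ := h
    have hmem (a : A) : (a₀ + a, b) ∈ V ↔ (a, 0) ∈ V := by
      rw [show ((a₀ + a, b) : A × B) = (a₀, b) + (a, 0) by simp, V.add_mem_cancel_left ha₀]
    rw [← Equiv.sum_comp (Equiv.addLeft a₀)]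
    simp only [Equiv.coe_addLeft, hmem]
    exact (sum_boole_mem (V.comap (AddMonoidHom.inl A B))).le
  · simp_all

theorem smul_indicatorMatrix_mul_conjTranspose [Fintype B] (c : ℝ) :
    ((c : ℂ) • indicatorMatrix V ℂ) * ((c : ℂ) • indicatorMatrix V ℂ)ᴴ =
      ((c ^ 2 : ℝ) : ℂ) • (indicatorMatrix V ℂ * (indicatorMatrix V ℂ)ᵀ) := by
  have hM : (indicatorMatrix V ℂ)ᴴ = (indicatorMatrix V ℂ)ᵀ := by
    ext
    simp only [conjTranspose_apply, transpose_apply, indicatorMatrix, of_apply]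
    split_ifs <;> simp
  rw [conjTranspose_smul, hM, Matrix.smul_mul, Matrix.mul_smul, smul_smul, Complex.star_def,
    Complex.conj_ofReal, Complex.ofReal_pow, sq]

variable [Fintype A] [Fintype B]

theorem sum_indicatorMatrix (R : Type*) [AddCommMonoidWithOne R] :
    ∑ a, ∑ b, indicatorMatrix V R a b = Nat.card V := by
  simp only [indicatorMatrix, of_apply]
  rw [← Fintype.sum_prod_type']
  exact sum_boole_mem V

theorem card_le_card_mul_card_comap_inr :
    Nat.card V ≤ Nat.card A * Nat.card (V.comap (AddMonoidHom.inr A B)) :=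
  calc Nat.card V = ∑ a, ∑ b, indicatorMatrix V ℕ a b := (sum_indicatorMatrix V ℕ).symm
    _ ≤ ∑ _a : A, Nat.card (V.comap (AddMonoidHom.inr A B)) :=
      Finset.sum_le_sum fun a _ => sum_indicatorMatrix_row_le V a
    _ = _ := by simp [Nat.card_eq_fintype_card]

theorem card_le_card_mul_card_comap_inl :
    Nat.card V ≤ Nat.card B * Nat.card (V.comap (AddMonoidHom.inl A B)) :=
  calc Nat.card V = ∑ b, ∑ a, indicatorMatrix V ℕ a b := by
        rw [Finset.sum_comm, sum_indicatorMatrix V ℕ, Nat.cast_id]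
    _ ≤ ∑ _b : B, Nat.card (V.comap (AddMonoidHom.inl A B)) :=
      Finset.sum_le_sum fun b _ => sum_indicatorMatrix_col_le V b
    _ = _ := by simp [Nat.card_eq_fintype_card]

theorem indicatorMatrix_mul_transpose_mul (R : Type*) [Semiring R] :
    indicatorMatrix V R * (indicatorMatrix V R)ᵀ * indicatorMatrix V R =
      ((Nat.card (V.comap (AddMonoidHom.inl A B)) * Nat.card (V.comap (AddMonoidHom.inr A B)) :
        ℕ) : R) • indicatorMatrix V R := by
  classical
  ext a w
  simp only [mul_apply, transpose_apply, Finset.sum_mul, Matrix.smul_apply, indicatorMatrix,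
    of_apply, ite_zero_mul_ite_zero, mul_one, smul_eq_mul]
  by_cases haw : (a, w) ∈ V
  · rw [if_pos haw, mul_one]
    -- substitute `d = a + u`, `z = w + v`: the three memberships become `u ∈ V_A`, `v ∈ V_B`
    have hmem (u : A) (v : B) :
        (((a, w + v) ∈ V ∧ (a + u, w + v) ∈ V) ∧ (a + u, w) ∈ V) ↔
          (u, 0) ∈ V ∧ (0, v) ∈ V := by
      rw [show ((a, w + v) : A × B) = (a, w) + (0, v) by simp,
        show ((a + u, w) : A × B) = (a, w) + (u, 0) by simp,
        show ((a + u, w + v) : A × B) = (a, w) + (u, v) from rfl,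
        V.add_mem_cancel_left haw, V.add_mem_cancel_left haw, V.add_mem_cancel_left haw]
      constructor
      · rintro ⟨⟨hv, -⟩, hu⟩
        exact ⟨hu, hv⟩
      · rintro ⟨hu, hv⟩
        exact ⟨⟨hv, by simpa using V.add_mem hu hv⟩, hu⟩
    rw [← Equiv.sum_comp (Equiv.addLeft a)]
    refine (Finset.sum_congr rfl fun u _ => (Equiv.sum_comp (Equiv.addLeft w) _).symm).trans ?_
    simp only [Equiv.coe_addLeft, hmem]
    rw [Nat.cast_mul, ← sum_boole_mem (V.comap (AddMonoidHom.inl A B)),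
      ← sum_boole_mem (V.comap (AddMonoidHom.inr A B)), Finset.sum_mul_sum]
    simp only [ite_zero_mul_ite_zero, mul_one]
    rfl
  · rw [if_neg haw, mul_zero]
    refine Finset.sum_eq_zero fun d _ => Finset.sum_eq_zero fun z _ => if_neg ?_
    rintro ⟨⟨haz, hdz⟩, hdw⟩
    refine haw ?_
    convert V.add_mem (V.sub_mem haz hdz) hdw using 1
    simp

theorem trace_indicatorMatrix_mul_transpose (R : Type*) [Semiring R] :
    (indicatorMatrix V R * (indicatorMatrix V R)ᵀ).trace = Nat.card V := by
  classical
  rw [← sum_indicatorMatrix V R]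
  simp only [trace, diag, mul_apply, transpose_apply, indicatorMatrix, of_apply,
    ite_zero_mul_ite_zero, mul_one, and_self]

end IndicatorMatrix

theorem Matrix.IsHermitian.eigenvalues_eq_zero_or_eq_of_mul_self_eq_smul {n : Type*} [Fintype n]
    [DecidableEq n] {ρ : Matrix n n ℂ} (hρ : ρ.IsHermitian) {μ : ℝ}
    (hsq : ρ * ρ = (μ : ℂ) • ρ) (i : n) :
    hρ.eigenvalues i = 0 ∨ hρ.eigenvalues i = μ := by
  set v : n → ℂ := ⇑(hρ.eigenvectorBasis i)
  set l := hρ.eigenvalues i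
  have hv : v ≠ 0 := by
    simpa [v] using hρ.eigenvectorBasis.orthonormal.ne_zero i
  have hρv : ρ *ᵥ v = l • v := hρ.mulVec_eigenvectorBasis i
  have key : (l * l) • v = (μ * l) • v := by
    calc (l * l) • v = ρ *ᵥ (ρ *ᵥ v) := by rw [hρv, mulVec_smul, hρv, smul_smul]
      _ = (μ * l) • v := by
        rw [mulVec_mulVec, hsq, smul_mulVec, hρv, Complex.coe_smul, smul_smul]
  have := smul_left_injective ℝ hv key
  rcases mul_eq_zero.mp (show l * (l - μ) = 0 by linear_combination this) with h | h
  · exact Or.inl h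
  · exact Or.inr (sub_eq_zero.mp h)

theorem vonNeumannEntropy_eq_neg_logb_of_mul_self_eq_smul {n : Type*} [Fintype n]
    [DecidableEq n] {ρ : Matrix n n ℂ} (hρ : ρ.IsHermitian) {μ : ℝ}
    (hsq : ρ * ρ = (μ : ℂ) • ρ) (htr : ρ.trace = 1) :
    vonNeumannEntropy ρ hρ = -Real.logb 2 μ := by
  have hsum : ∑ i, hρ.eigenvalues i = 1 := by
    have h : ((∑ i, hρ.eigenvalues i : ℝ) : ℂ) = 1 := by
      push_cast
      exact hρ.trace_eq_sum_eigenvalues.symm.trans htr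
    exact_mod_cast h
  unfold vonNeumannEntropy
  calc ∑ i, -(hρ.eigenvalues i * Real.logb 2 (hρ.eigenvalues i))
      = ∑ i, hρ.eigenvalues i * -Real.logb 2 μ := by
        refine Finset.sum_congr rfl fun i _ => ?_
        rcases hρ.eigenvalues_eq_zero_or_eq_of_mul_self_eq_smul hsq i with h | h <;> simp [h]
    _ = -Real.logb 2 μ := by rw [← Finset.sum_mul, hsum, one_mul]

theorem logb_two_div_le {N k e : ℕ} (hN : 0 < N) (hk : 0 < k) (h : N ≤ 2 ^ e * k) :
    Real.logb 2 (N / k) ≤ e := by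
  rw [Real.logb_le_iff_le_rpow one_lt_two (by positivity), Real.rpow_natCast,
    div_le_iff₀ (by positivity)]
  exact_mod_cast h

section SubgroupStateEntropy

variable {A B : Type*} [AddCommGroup A] [AddCommGroup B] [Fintype A] [Fintype B] [DecidableEq A]
  (V : AddSubgroup (A × B))

theorem vonNeumannEntropy_of_eq_mul_conjTranspose_indicatorMatrix {c : ℝ}
    (hc : c ^ 2 * Nat.card V = 1) {ρ : Matrix A A ℂ} (hρ : ρ.IsHermitian)
    (hρV : ρ = ((c : ℂ) • indicatorMatrix V ℂ) * ((c : ℂ) • indicatorMatrix V ℂ)ᴴ) :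
    vonNeumannEntropy ρ hρ = Real.logb 2 (Nat.card V /
      (Nat.card (V.comap (AddMonoidHom.inl A B)) * Nat.card (V.comap (AddMonoidHom.inr A B)))) := by
  set k := Nat.card (V.comap (AddMonoidHom.inl A B)) * Nat.card (V.comap (AddMonoidHom.inr A B))
  rw [smul_indicatorMatrix_mul_conjTranspose] at hρV
  have hsq : ρ * ρ = ((c ^ 2 * k : ℝ) : ℂ) • ρ := by
    rw [hρV, Matrix.smul_mul, Matrix.mul_smul, smul_smul, ← Matrix.mul_assoc,
      indicatorMatrix_mul_transpose_mul, Matrix.smul_mul, smul_smul, smul_smul]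
    congr 1
    push_cast [k]
    ring
  have htr : ρ.trace = 1 := by
    rw [hρV, trace_smul, trace_indicatorMatrix_mul_transpose, smul_eq_mul]
    exact_mod_cast hc
  rw [vonNeumannEntropy_eq_neg_logb_of_mul_self_eq_smul hρ hsq htr, ← Real.logb_inv,
    eq_inv_of_mul_eq_one_left hc, mul_inv, inv_inv, div_eq_mul_inv, Nat.cast_mul]

theorem vonNeumannEntropy_le_of_eq_mul_conjTranspose_indicatorMatrix
    {x y n m : ℕ} (hA : Nat.card A = 2 ^ x) (hB : Nat.card B = 2 ^ y)
    (hV : Nat.card V = 2 ^ n) (hnm : n + m = x + y) {c : ℝ} (hc : c ^ 2 * Nat.card V = 1)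
    {ρ : Matrix A A ℂ} (hρ : ρ.IsHermitian)
    (hρV : ρ = ((c : ℂ) • indicatorMatrix V ℂ) * ((c : ℂ) • indicatorMatrix V ℂ)ᴴ) :
    vonNeumannEntropy ρ hρ ≤ min (min (x : ℝ) y) (min n m) := by
  rw [vonNeumannEntropy_of_eq_mul_conjTranspose_indicatorMatrix V hc hρ hρV, ← Nat.cast_mul]
  set kA := Nat.card (V.comap (AddMonoidHom.inl A B))
  set kB := Nat.card (V.comap (AddMonoidHom.inr A B))
  have hkA : 0 < kA := Nat.card_pos
  have hkB : 0 < kB := Nat.card_pos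
  have hVA : Nat.card V ≤ 2 ^ x * kB := hA ▸ card_le_card_mul_card_comap_inr V
  have hVB : Nat.card V ≤ 2 ^ y * kA := hB ▸ card_le_card_mul_card_comap_inl V
  refine le_min (le_min ?_ ?_) (le_min ?_ ?_) <;>
    refine logb_two_div_le Nat.card_pos (Nat.mul_pos hkA hkB) ?_
  · nlinarith
  · nlinarith
  · exact hV ▸ Nat.le_mul_of_pos_right _ (Nat.mul_pos hkA hkB)
  · refine Nat.le_of_mul_le_mul_left ?_ (pow_pos two_pos n)
    calc 2 ^ n * Nat.card V = Nat.card V * Nat.card V := by rw [hV]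
      _ ≤ 2 ^ x * kB * (2 ^ y * kA) := Nat.mul_le_mul hVA hVB
      _ = 2 ^ n * (2 ^ m * (kA * kB)) := by
        rw [mul_mul_mul_comm, ← pow_add, ← hnm, pow_add]
        ring

end SubgroupStateEntropy

section Qubits

variable {L : ℕ}

theorem qX_eq_subgroupState : qX = subgroupState ⊥ 1 := by
  ext b
  simp [qX, subgroupState]

theorem qZ_eq_subgroupState : qZ = subgroupState ⊤ (Real.sqrt 2)⁻¹ := by
  ext b
  simp [qZ, subgroupState]

theorem productState_eq_subgroupState (pol : Fin L → Bool) :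
    ∃ (W : AddSubgroup (QV L)) (c : ℝ),
      Nat.card W = 2 ^ (Finset.univ.filter fun i => pol i = false).card ∧
      c ^ 2 * Nat.card W = 1 ∧
      (fun s => ∏ i, (if pol i then qX else qZ) (s i)) = subgroupState W c := by
  refine ⟨AddSubgroup.pi Set.univ fun i => if pol i then ⊥ else ⊤,
    ∏ i, if pol i then 1 else (Real.sqrt 2)⁻¹, ?_, ?_, ?_⟩
  · rw [AddSubgroup.card_pi_univ, Finset.card_filter, ← Finset.prod_pow_eq_pow_sum]
    refine Finset.prod_congr rfl fun i _ => ?_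
    cases pol i <;> simp
  · rw [AddSubgroup.card_pi_univ, Nat.cast_prod, ← Finset.prod_pow, ← Finset.prod_mul_distrib]
    refine Finset.prod_eq_one fun i _ => ?_
    cases pol i <;> simp
  · ext s
    rw [← prod_subgroupState]
    refine Finset.prod_congr rfl fun i _ => ?_
    cases pol i <;> simp [qX_eq_subgroupState, qZ_eq_subgroupState]

theorem applyCNOTs_subgroupState {gates : List (Fin L × Fin L)}
    (hgates : ∀ p ∈ gates, p.1 ≠ p.2) (W : AddSubgroup (QV L)) (c : ℝ) :
    ∃ S : AddSubgroup (QV L), Nat.card S = Nat.card W ∧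
      applyCNOTs gates (subgroupState W c) = subgroupState S c :=
  applyCNOTs_induction
    (fun ψ => ∃ S : AddSubgroup (QV L), Nat.card S = Nat.card W ∧ ψ = subgroupState S c)
    (fun _ _ h _ ⟨S, hS, hψ⟩ => ⟨S.comap (cnotAddEquiv h).toAddMonoidHom,
      (S.card_comap_addEquiv _).trans hS, hψ ▸ rfl⟩) hgates ⟨W, rfl, rfl⟩

def mergeAddEquiv (R : Finset (Fin L)) :
    (({i // i ∈ R} → ZMod 2) × ({i // i ∉ R} → ZMod 2)) ≃+ QV L :=
  (RingEquiv.piEquivPiSubtypeProd (· ∈ R) fun _ => ZMod 2).symm.toAddEquiv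

theorem reducedDM_subgroupState (R : Finset (Fin L)) (S : AddSubgroup (QV L)) (c : ℝ) :
    reducedDM R (subgroupState S c) =
      ((c : ℂ) • indicatorMatrix (S.comap (mergeAddEquiv R).toAddMonoidHom) ℂ) *
        ((c : ℂ) • indicatorMatrix (S.comap (mergeAddEquiv R).toAddMonoidHom) ℂ)ᴴ := by
  ext a b
  simp only [reducedDM, mul_apply, conjTranspose_apply, Matrix.smul_apply, indicatorMatrix,
    of_apply, subgroupState, smul_eq_mul, mul_ite, mul_one, mul_zero]
  -- `merge R a z` is `mergeAddEquiv R (a, z)` by definition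
  rfl

theorem card_configs_filter_val_lt (x : ℕ) (hx : x ≤ L) :
    Nat.card ({i // i ∈ Finset.univ.filter fun i : Fin L => (i : ℕ) < x} → ZMod 2) = 2 ^ x ∧
    Nat.card ({i // i ∉ Finset.univ.filter fun i : Fin L => (i : ℕ) < x} → ZMod 2) =
      2 ^ (L - x) := by
  have hR : (Finset.univ.filter fun i : Fin L => (i : ℕ) < x).card = x := by
    rw [Fin.card_filter_val_lt, min_eq_right hx]
  simp only [Nat.card_eq_fintype_card, Fintype.card_fun, ZMod.card, Fintype.card_subtype_compl,
    Fintype.card_coe, hR, Fintype.card_fin, and_self]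

end Qubits

/-- in a random CNOT circuit the X- and Z-basis coherences of any
pure state are conserved (CNOTs permute both the X- and Z-basis states), and
consequently, for an initial product state with `N_x` X-polarized and
`N_z = L − N_x` Z-polarized qubits, the entanglement entropy of the region
`[1, x]` after any sequence of CNOTs satisfies
`S(x) ≤ min (x, L − x, N_z, N_x)`. -/
theorem cnot_circuit_coherence_conserved_and_entanglement_bound {L : ℕ}
    (gates : List (Fin L × Fin L)) (hgates : ∀ p ∈ gates, p.1 ≠ p.2) :
    (∀ ψ : QV L → ℂ,
      shannonEntropy (fun s => ‖applyCNOTs gates ψ s‖ ^ 2) =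
        shannonEntropy (fun s => ‖ψ s‖ ^ 2) ∧
      shannonEntropy (fun s => ‖zAmp (applyCNOTs gates ψ) s‖ ^ 2) =
        shannonEntropy (fun s => ‖zAmp ψ s‖ ^ 2)) ∧
    (∀ (pol : Fin L → Bool) (q : Fin L → ZMod 2 → ℂ)
      (hq : ∀ i, q i = if pol i then qX else qZ)
      (Nx Nz : ℕ)
      (hNx : Nx = (Finset.univ.filter fun i => pol i = true).card)
      (hNz : Nz = (Finset.univ.filter fun i => pol i = false).card)
      (ψ0 : QV L → ℂ) (hψ0 : ψ0 = fun s => ∏ i, q i (s i))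
      (x : ℕ) (hx : x ≤ L)
      (hR : (reducedDM (Finset.univ.filter fun i : Fin L => (i : ℕ) < x)
              (applyCNOTs gates ψ0)).IsHermitian),
      vonNeumannEntropy _ hR ≤
        min (min (x : ℝ) ((L : ℝ) - x)) (min (Nz : ℝ) (Nx : ℝ))) := by
  refine ⟨fun ψ => ⟨?_, ?_⟩, fun pol q hq Nx Nz hNx hNz ψ0 hψ0 x hx hR => ?_⟩
  · exact applyCNOTs_invariant (fun φ => shannonEntropy fun s => ‖φ s‖ ^ 2)
      (fun _ _ h => shannonEntropy_normSq_comp_cnotPerm h) hgates ψ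
  · exact applyCNOTs_invariant (fun φ => shannonEntropy fun s => ‖zAmp φ s‖ ^ 2)
      (fun _ _ h => shannonEntropy_normSq_zAmp_comp_cnotPerm h) hgates ψ
  set R := Finset.univ.filter fun i : Fin L => (i : ℕ) < x
  obtain ⟨W, c, hW, hc, hψW⟩ := productState_eq_subgroupState pol
  obtain ⟨S, hSW, hψS⟩ := applyCNOTs_subgroupState hgates W c
  obtain ⟨hA, hB⟩ := card_configs_filter_val_lt x hx
  have hV := (S.card_comap_addEquiv (mergeAddEquiv R)).trans hSW
  have hnm : Nz + Nx = x + (L - x) := by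
    have := Finset.card_filter_add_card_filter_not (s := Finset.univ) fun i : Fin L => pol i = true
    simp only [Bool.not_eq_true, Finset.card_univ, Fintype.card_fin] at this
    omega
  have hS := vonNeumannEntropy_le_of_eq_mul_conjTranspose_indicatorMatrix _ hA hB
    (hV.trans (hNz ▸ hW)) hnm (hV ▸ hc) hR
    (by rw [hψ0, funext hq, hψW, hψS, reducedDM_subgroupState])
  rwa [Nat.cast_sub hx] at hS
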